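/- arXiv:2111.10681 — 8 statements merged into one kernel-verified Lean document; each statement's English description precedes it below -/
import Mathlib

section
/- Let w be a permutation of {1,…,n}. Then for every 1 ≤ i ≤ n one has r_i(w) ≥ ℓ_i(w); consequently raj(w) ≥ inv(w). -/
open scoped Classical

noncomputable section

namespace RajRegularity

variable {n : ℕ}

/-- Maximal length of an increasing subsequence of `w(i), …, w(n)` beginning with `w(i)`:
the largest cardinality of a set `s` of positions that contains `i`, consists of positions
`≥ i`, and on which `w` is strictly increasing. -/
def lisFrom (w : Equiv.Perm (Fin n)) (i : Fin n) : ℕ :=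
  (Finset.univ.filter fun s : Finset (Fin n) =>
      i ∈ s ∧ (∀ j ∈ s, i ≤ j) ∧ ∀ j ∈ s, ∀ k ∈ s, j < k → w j < w k).sup Finset.card

/-- `rajCode w i = (n − i + 1) −` (maximal length of an increasing subsequence of
`w(i), …, w(n)` beginning with `w(i)`); here positions are 0-based, so the number of
positions `≥ i` is `n - i`. -/
def rajCode (w : Equiv.Perm (Fin n)) (i : Fin n) : ℕ :=
  (n - (i : ℕ)) - lisFrom w i

/-- The Rajchgot index `raj w = Σᵢ rajCode w i`. -/
def raj (w : Equiv.Perm (Fin n)) : ℕ := ∑ i, rajCode w i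

/-- The number of inversions of `w`: pairs of positions `i < j` with `w i > w j`. -/
def invNum (w : Equiv.Perm (Fin n)) : ℕ :=
  (Finset.univ.filter fun p : Fin n × Fin n => p.1 < p.2 ∧ w p.2 < w p.1).card

/-- The `i`-th entry of the inv code: `ℓ_i(w) = #{ j : i < j, w j < w i }`. -/
def ellCode (w : Equiv.Perm (Fin n)) (i : Fin n) : ℕ :=
  (Finset.univ.filter fun j : Fin n => i < j ∧ w j < w i).card

/-- The set of descent positions of `w` (0-based position `j` with `w j > w (j+1)`). -/
def descents (w : Equiv.Perm (Fin n)) : Finset (Fin n) :=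
  Finset.univ.filter fun j : Fin n =>
    if h : (j : ℕ) + 1 < n then w ⟨(j : ℕ) + 1, h⟩ < w j else False

/-- The major index: the sum of the (1-based) descent positions of `w`. -/
def maj (w : Equiv.Perm (Fin n)) : ℕ := ∑ j ∈ descents w, ((j : ℕ) + 1)

/-- `mCode w i`: the number of descents of `w` at positions `≥ i`. -/
def mCode (w : Equiv.Perm (Fin n)) (i : Fin n) : ℕ :=
  ((descents w).filter fun j => i ≤ j).card

/-- `w` is dominant iff it avoids the pattern 132. -/
def Dominant (w : Equiv.Perm (Fin n)) : Prop :=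
  ¬ ∃ i j k : Fin n, i < j ∧ j < k ∧ w i < w k ∧ w k < w j

/-- `w` is fireworks iff there are no positions `i < j` with `w j < w (j+1) < w i`. -/
def Fireworks (w : Equiv.Perm (Fin n)) : Prop :=
  ¬ ∃ (i j : Fin n) (h : (j : ℕ) + 1 < n),
      i < j ∧ w j < w ⟨(j : ℕ) + 1, h⟩ ∧ w ⟨(j : ℕ) + 1, h⟩ < w i

/-- `w` is inverse fireworks iff `w⁻¹` is fireworks. -/
def InvFireworks (w : Equiv.Perm (Fin n)) : Prop := Fireworks w⁻¹

/-- `w` is a valley permutation: for some `a`, it is strictly decreasing on positions `≤ a`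
and strictly increasing on positions `≥ a`. -/
def Valley (w : Equiv.Perm (Fin n)) : Prop :=
  ∃ a : ℕ, (∀ i j : Fin n, i < j → (j : ℕ) ≤ a → w j < w i) ∧
    ∀ i j : Fin n, a ≤ (i : ℕ) → i < j → w i < w j

/-- `eps w i` is the (1-based) blob index `ε_i(w) = i + r_i(w)`. -/
def eps (w : Equiv.Perm (Fin n)) (i : Fin n) : ℕ := (i : ℕ) + 1 + rajCode w i

/-- The shape of `w`: `α_k(w) = #{ i : ε_i(w) = k }` (here `k : Fin n` stands for the
1-based index `k + 1`). -/
def shape (w : Equiv.Perm (Fin n)) : Fin n → ℕ := fun k =>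
  (Finset.univ.filter fun i : Fin n => eps w i = (k : ℕ) + 1).card

/-- Dominance order on shapes: `α ⪰ β` iff every tail sum of `α` is at least the
corresponding tail sum of `β`. -/
def Dominates (α β : Fin n → ℕ) : Prop :=
  ∀ m : Fin n,
    ∑ k ∈ Finset.univ.filter (fun k : Fin n => m ≤ k), β k ≤
      ∑ k ∈ Finset.univ.filter (fun k : Fin n => m ≤ k), α k

/-- Right weak order: `u ≤_R w` iff `w = u * v` length-additively. -/
def leR (u w : Equiv.Perm (Fin n)) : Prop :=
  ∃ v : Equiv.Perm (Fin n), w = u * v ∧ invNum w = invNum u + invNum v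

/-- Left weak order: `u ≤_L w` iff `w = v * u` length-additively. -/
def leL (u w : Equiv.Perm (Fin n)) : Prop :=
  ∃ v : Equiv.Perm (Fin n), w = v * u ∧ invNum w = invNum v + invNum u

/-- Two-sided weak order: the transitive closure of the union of left and right weak
orders (both are reflexive, so we may use the reflexive-transitive closure). -/
def leLR (u w : Equiv.Perm (Fin n)) : Prop :=
  Relation.ReflTransGen (fun a b : Equiv.Perm (Fin n) => leL a b ∨ leR a b) u w

/-- The maximum of the block of the set partition `π(w)` containing the value `v`;
the block of `v` is `{ v' : ε_{w⁻¹ v'}(w) = ε_{w⁻¹ v}(w) }`. -/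
def blockMax (w : Equiv.Perm (Fin n)) (v : Fin n) : ℕ :=
  ((Finset.univ.filter fun v' : Fin n => eps w (w⁻¹ v') = eps w (w⁻¹ v)).max'
      ⟨v, Finset.mem_filter.mpr ⟨Finset.mem_univ v, rfl⟩⟩).val

/-- The fireworks map `Φ`: the one-line word of `Φ w` lists the blocks of `π(w)` in
increasing order of their maxima, each block written in decreasing order.  Equivalently,
`Φ w` sorts the values by the key (max of block, value reversed), lexicographically. -/
def Phi (w : Equiv.Perm (Fin n)) : Equiv.Perm (Fin n) :=
  Tuple.sort fun v : Fin n => n * blockMax w v + (n - 1 - (v : ℕ))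

/-- The inverse fireworks map `Φ_inv w = Φ(w⁻¹)⁻¹`. -/
def PhiInv (w : Equiv.Perm (Fin n)) : Equiv.Perm (Fin n) := (Phi w⁻¹)⁻¹

/-- Partial sums of a sequence of block sizes. -/
def psum (a : ℕ → ℕ) (m : ℕ) : ℕ := ∑ j ∈ Finset.range m, a j

/-- The index of the block (interval `[psum a m, psum a (m+1))`) containing the value `v`. -/
def blockIdx (n : ℕ) (a : ℕ → ℕ) (v : Fin n) : ℕ :=
  ((Finset.range n).filter fun m => psum a (m + 1) ≤ (v : ℕ)).card

/-- The layered permutation with block sizes `a 0, a 1, …`: it reverses each of the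
consecutive intervals `[psum a m, psum a (m+1))` of `{0, …, n-1}`.  Equivalently, its
one-line word sorts the values by (block index, value reversed) lexicographically. -/
def layered (n : ℕ) (a : ℕ → ℕ) : Equiv.Perm (Fin n) :=
  Tuple.sort fun v : Fin n => n * blockIdx n a v + (n - 1 - (v : ℕ))

/-- The layered permutation `e_α` associated to a shape `α : Fin n → ℕ`. -/
def eOf (α : Fin n → ℕ) : Equiv.Perm (Fin n) :=
  layered n fun m => if h : m < n then α ⟨m, h⟩ else 0

lemma ell_le_raj (w : Equiv.Perm (Fin n)) (i : Fin n) : ellCode w i ≤ rajCode w i := by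
  set T : Finset (Fin n) := Finset.univ.filter fun j : Fin n => i < j ∧ w j < w i with hT
  have hTsub : T ⊆ Finset.univ.filter fun j : Fin n => i ≤ j := by
    intro j hj
    simp only [hT, Finset.mem_filter] at hj ⊢
    exact ⟨Finset.mem_univ j, le_of_lt hj.2.1⟩
  have hIci : (Finset.univ.filter fun j : Fin n => i ≤ j).card = n - (i : ℕ) := by
    have : (Finset.univ.filter fun j : Fin n => i ≤ j) = Finset.Ici i := by
      ext j; simp
    rw [this, Fin.card_Ici]
  have key : ∀ s ∈ (Finset.univ.filter fun s : Finset (Fin n) =>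
      i ∈ s ∧ (∀ j ∈ s, i ≤ j) ∧ ∀ j ∈ s, ∀ k ∈ s, j < k → w j < w k),
      s.card ≤ n - (i : ℕ) - ellCode w i := by
    intro s hs
    simp only [Finset.mem_filter] at hs
    obtain ⟨-, his, hle, hinc⟩ := hs
    have hdisj : Disjoint s T := by
      rw [Finset.disjoint_left]
      intro j hjs hjT
      simp only [hT, Finset.mem_filter] at hjT
      exact absurd (hinc i his j hjs hjT.2.1) (not_lt.mpr (le_of_lt hjT.2.2))
    have hsub : s ∪ T ⊆ Finset.univ.filter fun j : Fin n => i ≤ j := by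
      intro j hj
      rcases Finset.mem_union.mp hj with h | h
      · simp only [Finset.mem_filter]; exact ⟨Finset.mem_univ j, hle j h⟩
      · exact hTsub h
    have := Finset.card_le_card hsub
    rw [Finset.card_union_of_disjoint hdisj, hIci] at this
    have : s.card + ellCode w i ≤ n - (i : ℕ) := this
    omega
  have h1 : lisFrom w i ≤ n - (i : ℕ) - ellCode w i := Finset.sup_le key
  have h2 : ellCode w i ≤ n - (i : ℕ) := hIci ▸ Finset.card_le_card hTsub
  unfold rajCode
  omega

lemma inv_eq_sum_ell (w : Equiv.Perm (Fin n)) : invNum w = ∑ i, ellCode w i := by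
  unfold invNum ellCode
  rw [Finset.card_eq_sum_card_fiberwise
    (f := Prod.fst) (t := Finset.univ) (fun _ _ => Finset.mem_univ _)]
  refine Finset.sum_congr rfl fun i _ => ?_
  refine Finset.card_bij (fun p _ => p.2) ?_ ?_ ?_
  · intro p hp
    simp only [Finset.mem_filter, Finset.mem_univ, true_and] at hp ⊢
    rw [hp.2] at hp
    exact hp.1
  · intro p hp q hq h
    simp only [Finset.mem_filter] at hp hq
    exact Prod.ext (hp.2.trans hq.2.symm) h
  · intro j hj
    simp only [Finset.mem_filter, Finset.mem_univ, true_and] at hj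
    exact ⟨(i, j), by simp [hj], rfl⟩

/-- For every position `i`, `r_i(w) ≥ ℓ_i(w)`; consequently `raj(w) ≥ inv(w)`. -/
theorem ellCode_le_rajCode_and_invNum_le_raj (n : ℕ) (w : Equiv.Perm (Fin n)) :
    (∀ i : Fin n, ellCode w i ≤ rajCode w i) ∧ invNum w ≤ raj w := by
  refine ⟨fun i => ell_le_raj w i, ?_⟩
  rw [inv_eq_sum_ell, raj]
  exact Finset.sum_le_sum fun i _ => ell_le_raj w i

end RajRegularity
end
end

section
/- Let w be a permutation of {1,…,n}. Then for every 1 ≤ i ≤ n one has r_i(w) ≥ m_i(w); consequently raj(w) ≥ maj(w). -/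
open scoped Classical

noncomputable section

namespace RajRegularity

variable {n : ℕ}

open Finset

lemma mem_descents_iff {w : Equiv.Perm (Fin n)} {j : Fin n} :
    j ∈ descents w ↔ ∃ h : (j : ℕ) + 1 < n, w ⟨(j : ℕ) + 1, h⟩ < w j := by
  simp [descents]

lemma le_of_Ico_subset_descents (w : Equiv.Perm (Fin n)) {a b : Fin n} (hab : a ≤ b)
    (hdesc : Ico a b ⊆ descents w) : w b ≤ w a := by
  induction hb : (b : ℕ) generalizing b with
  | zero =>
    obtain rfl : a = b := Fin.ext (by have := Fin.le_def.1 hab; omega)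
    exact le_rfl
  | succ k ih =>
    rcases hab.eq_or_lt with rfl | hlt
    · exact le_rfl
    have hlt' := Fin.lt_def.1 hlt
    set c : Fin n := ⟨k, by omega⟩
    have hac : a ≤ c := Fin.le_def.2 (show (a : ℕ) ≤ k by omega)
    have hcb : c < b := Fin.lt_def.2 (show k < (b : ℕ) by omega)
    obtain ⟨hc1, hwc⟩ := mem_descents_iff.1 (hdesc (mem_Ico.2 ⟨hac, hcb⟩))
    have hsucc : (⟨(c : ℕ) + 1, hc1⟩ : Fin n) = b := Fin.ext hb.symm
    rw [hsucc] at hwc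
    exact hwc.le.trans (ih hac ((Ico_subset_Ico_right hcb.le).trans hdesc) rfl)

/-- An increasing pair `w a < w b` forces an ascent somewhere in `[a, b)`. -/
lemma card_descents_inter_Ico_lt (w : Equiv.Perm (Fin n)) {a b : Fin n} (hab : a < b)
    (hw : w a < w b) : #(descents w ∩ Ico a b) < b - a := by
  rw [← Fin.card_Ico]
  by_contra! hcard
  have hall := eq_of_subset_of_card_le inter_subset_right hcard
  have := le_of_Ico_subset_descents w hab.le (hall ▸ inter_subset_left)
  exact absurd hw (not_lt.2 this)

lemma mCode_lt (w : Equiv.Perm (Fin n)) (i : Fin n) : mCode w i < n - i := by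
  have hi := i.isLt
  let last : Fin n := ⟨n - 1, by omega⟩
  have hlast : last ∉ descents w := fun h => by
    obtain ⟨h, -⟩ := mem_descents_iff.1 h
    exact absurd h (show ¬(n - 1 + 1 < n) by omega)
  have hilast : i ≤ last := Fin.le_def.2 (show (i : ℕ) ≤ n - 1 by omega)
  rw [← Fin.card_Ici, mCode]
  exact card_lt_card ⟨fun j hj => mem_Ici.2 (mem_filter.1 hj).2,
    fun hsub => hlast (mem_filter.1 (hsub (mem_Ici.2 hilast))).1⟩

lemma mCode_eq_card_descents_inter_Ico_add (w : Equiv.Perm (Fin n)) {a b : Fin n}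
    (hab : a ≤ b) : mCode w a = #(descents w ∩ Ico a b) + mCode w b := by
  rw [mCode, mCode, ← card_union_of_disjoint]
  · congr 1
    ext j
    simp only [mem_filter, mem_union, mem_inter, mem_Ico]
    constructor
    · rintro ⟨hj, haj⟩
      exact (lt_or_ge j b).imp (fun hjb => ⟨hj, haj, hjb⟩) (fun hbj => ⟨hj, hbj⟩)
    · rintro (⟨hj, haj, -⟩ | ⟨hj, hbj⟩)
      exacts [⟨hj, haj⟩, ⟨hj, hab.trans hbj⟩]
  · refine disjoint_left.2 fun j hj hj' => ?_
    exact absurd (mem_filter.1 hj').2 (not_le.2 (mem_Ico.1 (mem_inter.1 hj).2).2)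

/-- Peel off `i`: since `w i < w i'` for the next element `i'` of `s`, fewer than `i' - i`
of the positions in `[i, i')` are descents. -/
lemma card_add_mCode_le (w : Equiv.Perm (Fin n)) (s : Finset (Fin n)) (i : Fin n)
    (hi : i ∈ s) (hge : ∀ j ∈ s, i ≤ j) (hinc : ∀ j ∈ s, ∀ k ∈ s, j < k → w j < w k) :
    #s + mCode w i ≤ n - i := by
  induction s using Finset.strongInduction generalizing i with
  | H s ih =>
    have hcard := card_erase_add_one hi
    rcases (s.erase i).eq_empty_or_nonempty with hrest | hrest
    · have := mCode_lt w i
      rw [hrest, card_empty] at hcard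
      omega
    set i' := (s.erase i).min' hrest
    have hi'mem := mem_erase.1 (min'_mem _ hrest)
    have hii' : i < i' := lt_of_le_of_ne (hge i' hi'mem.2) hi'mem.1.symm
    have hrest_le : #(s.erase i) + mCode w i' ≤ n - i' :=
      ih _ (erase_ssubset hi) i' (min'_mem _ hrest) (fun j hj => min'_le _ j hj)
        (fun j hj k hk => hinc j (mem_of_mem_erase hj) k (mem_of_mem_erase hk))
    have hgap := card_descents_inter_Ico_lt w hii' (hinc i hi i' hi'mem.2 hii')
    have hsplit := mCode_eq_card_descents_inter_Ico_add w hii'.le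
    have hi'n : (i' : ℕ) < n := i'.isLt
    have : (i : ℕ) < i' := hii'
    omega

lemma lisFrom_add_mCode_le (w : Equiv.Perm (Fin n)) (i : Fin n) :
    lisFrom w i + mCode w i ≤ n - i := by
  have hlis : lisFrom w i ≤ n - i - mCode w i := Finset.sup_le fun s hs => by
    obtain ⟨-, hi, hge, hinc⟩ := mem_filter.1 hs
    have := card_add_mCode_le w s i hi hge hinc
    omega
  have := mCode_lt w i
  omega

lemma maj_eq_sum_mCode (w : Equiv.Perm (Fin n)) : maj w = ∑ i, mCode w i := by
  simp only [mCode, card_filter]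
  rw [sum_comm, maj]
  refine sum_congr rfl fun j _ => ?_
  rw [sum_boole, filter_ge_eq_Iic, Fin.card_Iic, Nat.cast_id]

/-- For every position `i`, `r_i(w) ≥ m_i(w)`; consequently `raj(w) ≥ maj(w)`. -/
theorem mCode_le_rajCode_and_maj_le_raj (n : ℕ) (w : Equiv.Perm (Fin n)) :
    (∀ i : Fin n, mCode w i ≤ rajCode w i) ∧ maj w ≤ raj w := by
  have hcode : ∀ i : Fin n, mCode w i ≤ rajCode w i := fun i => by
    have := lisFrom_add_mCode_le w i
    rw [rajCode]
    omega
  refine ⟨hcode, ?_⟩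
  rw [maj_eq_sum_mCode, raj]
  exact sum_le_sum fun i _ => hcode i

end RajRegularity
end
end

section
/- Let w be a permutation of {1,…,n}. Then raj(w) = maj(w) if and only if w is a fireworks permutation. -/
open scoped Classical

noncomputable section

namespace RajRegularity

variable {n : ℕ}

/-!
Split the `n - 1 - i` adjacent pairs at positions `≥ i` into descents and ascents: then
`r_i = m_i + (a_i + 1 - L_i)`, where `m_i` counts the descents at positions `≥ i` (and
`maj = Σ m_i`), `a_i` counts the ascent tops `k > i` (positions with `w (k - 1) < w k`) and `L_i`
is the longest increasing subsequence starting at `w i`. Between consecutive entries of such a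
subsequence lies an ascent whose top exceeds `w i`, so `L_i ≤ 1 + #{ascent tops k > i with
w k > w i} ≤ a_i + 1` and `raj ≥ maj` termwise. Fireworks says precisely that every ascent top
exceeds all earlier values: then `w i` followed by the ascent tops after `i` is increasing and
`L_i = a_i + 1`, while an ascent top below an earlier value makes the second bound strict.
-/

open Finset

def ascentTops (w : Equiv.Perm (Fin n)) (i : Fin n) : Finset (Fin n) :=
  (Ioi i).filter fun k : Fin n => ∃ j : Fin n, (j : ℕ) + 1 = k ∧ w j < w k

lemma mem_ascentTops {w : Equiv.Perm (Fin n)} {i k : Fin n} :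
    k ∈ ascentTops w i ↔ i < k ∧ ∃ j : Fin n, (j : ℕ) + 1 = k ∧ w j < w k := by
  simp [ascentTops]

lemma card_ascentTops_add_mCode (w : Equiv.Perm (Fin n)) (i : Fin n) :
    #(ascentTops w i) + mCode w i = n - 1 - i := by
  have hdesc : mCode w i =
      #((Ioi i).filter fun k : Fin n => ¬ ∃ j : Fin n, (j : ℕ) + 1 = k ∧ w j < w k) := by
    refine card_bij (fun j hj => ⟨(j : ℕ) + 1, (mem_descents_iff.1 (mem_filter.1 hj).1).1⟩)
      ?_ ?_ ?_
    · intro j hj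
      obtain ⟨hjd, hij⟩ := mem_filter.1 hj
      obtain ⟨h, hd⟩ := mem_descents_iff.1 hjd
      refine mem_filter.2 ⟨mem_Ioi.2 (Fin.lt_def.2 (Nat.lt_succ_of_le (Fin.le_def.1 hij))), ?_⟩
      rintro ⟨p, hp, hasc⟩
      obtain rfl : p = j := Fin.ext (by simpa using hp)
      exact lt_asymm hd hasc
    · intro a _ b _ h
      exact Fin.ext (by simpa using congrArg Fin.val h)
    · intro k hk
      obtain ⟨hik, hnasc⟩ := mem_filter.1 hk
      have hik : (i : ℕ) < k := Fin.lt_def.1 (mem_Ioi.1 hik)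
      obtain ⟨j, hjk⟩ : ∃ j : Fin n, (j : ℕ) + 1 = k := ⟨⟨k - 1, by omega⟩, by simp; omega⟩
      have hkj : w k < w j := lt_of_le_of_ne (not_lt.1 fun h => hnasc ⟨j, hjk, h⟩)
        (w.injective.ne (Fin.ne_of_val_ne (by omega)))
      have hk : (⟨(j : ℕ) + 1, by omega⟩ : Fin n) = k := Fin.ext hjk
      exact ⟨j, mem_filter.2 ⟨mem_descents_iff.2 ⟨by omega, hk ▸ hkj⟩,
        Fin.le_def.2 (by omega)⟩, hk⟩
  rw [hdesc, ascentTops, card_filter_add_card_filter_not, Fin.card_Ioi]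

lemma exists_mem_ascentTops {w : Equiv.Perm (Fin n)} {a b : Fin n} (hab : a < b)
    (hw : w a < w b) : ∃ k ∈ ascentTops w a, k ≤ b ∧ w b ≤ w k := by
  revert hab hw
  induction b using WellFoundedLT.induction with
  | _ b ih =>
    intro hab hw
    have hab' : (a : ℕ) < b := hab
    obtain ⟨j, hjb⟩ : ∃ j : Fin n, (j : ℕ) + 1 = b := ⟨⟨b - 1, by omega⟩, by simp; omega⟩
    by_cases hasc : w j < w b
    · exact ⟨b, mem_ascentTops.2 ⟨hab, j, hjb, hasc⟩, le_rfl, le_rfl⟩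
    have hbj : w b < w j := lt_of_le_of_ne (not_lt.1 hasc)
      (w.injective.ne (Fin.ne_of_val_ne (by omega)))
    have haj : a < j := lt_of_le_of_ne (Fin.le_def.2 (by omega))
      (by rintro rfl; exact lt_asymm hw hbj)
    obtain ⟨k, hk, hkj, hjk⟩ := ih j (Fin.lt_def.2 (by omega)) haj (hw.trans hbj)
    exact ⟨k, hk, hkj.trans (Fin.le_def.2 (by omega)), hbj.le.trans hjk⟩

lemma card_le_card_filter_ascentTops_add_one {w : Equiv.Perm (Fin n)} {s : Finset (Fin n)}
    {i : Fin n} (hi : i ∈ s) (hmin : ∀ k ∈ s, i ≤ k)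
    (hmono : ∀ j ∈ s, ∀ k ∈ s, j < k → w j < w k) :
    #s ≤ #((ascentTops w i).filter fun k => w i < w k) + 1 := by
  induction s using Finset.induction_on_min generalizing i with
  | empty => simp at hi
  | insert a s has ih =>
    obtain rfl : i = a := le_antisymm (hmin a (mem_insert_self a s))
      (by rcases mem_insert.1 hi with h | h; exacts [h.ge, (has i h).le])
    rw [card_insert_of_notMem fun h => lt_irrefl i (has i h)]
    rcases s.eq_empty_or_nonempty with rfl | hs
    · simp
    set i' := s.min' hs
    have hi' : i' ∈ s := s.min'_mem hs
    have hii' : i < i' := has i' hi'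
    have hwi : w i < w i' := hmono i (mem_insert_self i s) i' (mem_insert_of_mem hi') hii'
    have hcard := ih hi' (fun k hk => s.min'_le k hk)
      (fun j hj k hk => hmono j (mem_insert_of_mem hj) k (mem_insert_of_mem hk))
    obtain ⟨k₀, hk₀, hk₀i', hwk₀⟩ := exists_mem_ascentTops hii' hwi
    have hsub : (ascentTops w i').filter (fun k => w i' < w k) ⊂
        (ascentTops w i).filter (fun k => w i < w k) := by
      rw [ssubset_iff_of_subset]
      · refine ⟨k₀, mem_filter.2 ⟨hk₀, hwi.trans_le hwk₀⟩, fun h => ?_⟩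
        exact not_le.2 (mem_ascentTops.1 (mem_filter.1 h).1).1 hk₀i'
      · intro k hk
        obtain ⟨hk, hwk⟩ := mem_filter.1 hk
        obtain ⟨hik, hasc⟩ := mem_ascentTops.1 hk
        exact mem_filter.2 ⟨mem_ascentTops.2 ⟨hii'.trans hik, hasc⟩, hwi.trans hwk⟩
    have := card_lt_card hsub
    omega

lemma lisFrom_le_card_filter_ascentTops_add_one (w : Equiv.Perm (Fin n)) (i : Fin n) :
    lisFrom w i ≤ #((ascentTops w i).filter fun k => w i < w k) + 1 :=
  Finset.sup_le fun _ hs =>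
    have hs := (mem_filter.1 hs).2
    card_le_card_filter_ascentTops_add_one hs.1 hs.2.1 hs.2.2

lemma rajCode_eq_mCode_add (w : Equiv.Perm (Fin n)) (i : Fin n) :
    rajCode w i = mCode w i + (#(ascentTops w i) + 1 - lisFrom w i) := by
  have hL := lisFrom_le_card_filter_ascentTops_add_one w i
  have hT := card_le_card (filter_subset (fun k => w i < w k) (ascentTops w i))
  have hcount := card_ascentTops_add_mCode w i
  have hi := i.isLt
  unfold rajCode
  omega

lemma mCode_le_rajCode (w : Equiv.Perm (Fin n)) (i : Fin n) : mCode w i ≤ rajCode w i :=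
  (rajCode_eq_mCode_add w i).symm ▸ Nat.le_add_right _ _

lemma Fireworks.lt_of_lt_ascentTop {w : Equiv.Perm (Fin n)} (hF : Fireworks w)
    {j k l : Fin n} (hjk : (j : ℕ) + 1 = k) (hasc : w j < w k) (hlk : l < k) : w l < w k := by
  rcases (Fin.le_def.2 (by rw [Fin.lt_def] at hlk; omega) : l ≤ j).lt_or_eq with hlj | rfl
  · have h : (j : ℕ) + 1 < n := hjk ▸ k.isLt
    obtain rfl : k = ⟨(j : ℕ) + 1, h⟩ := Fin.ext hjk.symm
    exact lt_of_le_of_ne (not_lt.1 fun hkl => hF ⟨l, j, h, hlj, hasc, hkl⟩)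
      (w.injective.ne hlk.ne)
  · exact hasc

lemma Fireworks.card_ascentTops_add_one_le_lisFrom {w : Equiv.Perm (Fin n)} (hF : Fireworks w)
    (i : Fin n) : #(ascentTops w i) + 1 ≤ lisFrom w i := by
  have hiT : i ∉ ascentTops w i := fun h => lt_irrefl i (mem_ascentTops.1 h).1
  have hge : ∀ j ∈ insert i (ascentTops w i), i ≤ j := by
    intro j hj
    rcases mem_insert.1 hj with rfl | hj
    exacts [le_rfl, (mem_ascentTops.1 hj).1.le]
  rw [← card_insert_of_notMem hiT]
  refine le_sup (f := Finset.card) (mem_filter.2 ⟨mem_univ _, mem_insert_self i _, hge, ?_⟩)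
  intro j hj k hk hjk
  rcases mem_insert.1 hk with rfl | hk
  · exact absurd hjk (not_lt.2 (hge j hj))
  obtain ⟨-, p, hpk, hasc⟩ := mem_ascentTops.1 hk
  exact hF.lt_of_lt_ascentTop hpk hasc hjk

lemma forall_card_ascentTops_add_one_le_lisFrom_iff {w : Equiv.Perm (Fin n)} :
    (∀ i, #(ascentTops w i) + 1 ≤ lisFrom w i) ↔ Fireworks w := by
  refine ⟨fun hL ⟨i, j, h, hij, hasc, hk⟩ => ?_, fun hF => hF.card_ascentTops_add_one_le_lisFrom⟩
  have hkT : ⟨(j : ℕ) + 1, h⟩ ∈ ascentTops w i :=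
    mem_ascentTops.2 ⟨hij.trans (Fin.lt_def.2 (Nat.lt_succ_self _)), j, rfl, hasc⟩
  have hsub : (ascentTops w i).filter (fun k => w i < w k) ⊂ ascentTops w i :=
    (ssubset_iff_of_subset (filter_subset _ _)).2
      ⟨_, hkT, fun h => lt_asymm hk (mem_filter.1 h).2⟩
  have := card_lt_card hsub
  have := lisFrom_le_card_filter_ascentTops_add_one w i
  have := hL i
  omega

/-- `raj(w) = maj(w)` iff `w` is a fireworks permutation. -/
theorem raj_eq_maj_iff_fireworks (n : ℕ) (w : Equiv.Perm (Fin n)) :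
    raj w = maj w ↔ Fireworks w := by
  rw [raj, maj_eq_sum_mCode, eq_comm, sum_eq_sum_iff_of_le fun i _ => mCode_le_rajCode w i]
  simp only [mem_univ, forall_const, rajCode_eq_mCode_add, left_eq_add, Nat.sub_eq_zero_iff_le]
  exact forall_card_ascentTops_add_one_le_lisFrom_iff

end RajRegularity
end
end

section
/- The number of fireworks permutations of {1,…,n} equals the number of set partitions of {1,…,n} (the n-th Bell number). -/
open scoped Classical

noncomputable section

/-! The heads of the decreasing runs of a permutation are the maxima of the runs, so a fireworks
permutation lists the blocks of a set partition in increasing order of their maxima, each block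
in decreasing order, and every set partition arises this way exactly once. Both sides are
encoded by the map sending each element to the maximum of its block: for a permutation this is
the largest value `≥ v` occurring no later than `v`, and the permutation is recovered from it by
sorting the values by (block maximum, value reversed). -/

open Finset Function OrderDual

def BlockMaxMap (α : Type*) [Preorder α] : Type _ :=
  {f : α → α // (∀ a, a ≤ f a) ∧ ∀ a, f (f a) = f a}

namespace Finpartition

variable {α : Type*} [Fintype α] [LinearOrder α]

theorem ext_part {P Q : Finpartition (univ : Finset α)} (h : ∀ a, P.part a = Q.part a) :
    P = Q := by
  ext t
  constructor
  all_goals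
    intro ht
    obtain ⟨a, ha⟩ := nonempty_of_mem_parts _ ht
  · rw [← P.part_eq_of_mem ht ha, h a]
    exact Q.part_mem.2 (mem_univ a)
  · rw [← Q.part_eq_of_mem ht ha, ← h a]
    exact P.part_mem.2 (mem_univ a)

variable (P : Finpartition (univ : Finset α))

def partMax (a : α) : α :=
  (P.part a).max' (P.part_nonempty.2 (mem_univ a))

theorem le_partMax (a : α) : a ≤ P.partMax a :=
  le_max' _ _ (P.mem_part_self.2 (mem_univ a))

theorem part_partMax (a : α) : P.part (P.partMax a) = P.part a :=
  P.part_eq_of_mem (P.part_mem.2 (mem_univ a)) (max'_mem _ _)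

theorem partMax_eq_partMax_iff {a b : α} : P.partMax a = P.partMax b ↔ P.part a = P.part b :=
  ⟨fun h => by rw [← P.part_partMax a, h, P.part_partMax], fun h => by simp only [partMax, h]⟩

theorem partMax_partMax (a : α) : P.partMax (P.partMax a) = P.partMax a :=
  (P.partMax_eq_partMax_iff).2 (P.part_partMax a)

theorem partMax_ofSetoid_ker (f : BlockMaxMap α) (a : α) :
    (ofSetoid (Setoid.ker f.1)).partMax a = f.1 a := by
  refine le_antisymm (max'_le _ _ _ fun b hb => ?_) (le_max' _ _ ?_)
  · rw [mem_part_ofSetoid_iff_rel] at hb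
    exact (f.2.1 b).trans_eq (hb : f.1 a = f.1 b).symm
  · exact mem_part_ofSetoid_iff_rel.2 (f.2.2 a).symm

def equivBlockMaxMap : Finpartition (univ : Finset α) ≃ BlockMaxMap α where
  toFun P := ⟨P.partMax, P.le_partMax, P.partMax_partMax⟩
  invFun f := ofSetoid (Setoid.ker f.1)
  left_inv P := ext_part fun a => by
    ext b
    rw [mem_part_ofSetoid_iff_rel, Setoid.ker_def, partMax_eq_partMax_iff,
      P.mem_part_iff_part_eq_part (mem_univ b) (mem_univ a), eq_comm]
  right_inv f := Subtype.ext (funext (partMax_ofSetoid_ker f))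

end Finpartition

theorem Equiv.Perm.inv_apply_self {α : Type*} (σ : Equiv.Perm α) (a : α) : σ⁻¹ (σ a) = a :=
  σ.symm_apply_apply a

theorem Fin.lt_mk_val_add_one_iff {n : ℕ} {i j : Fin n} (hj : (j : ℕ) + 1 < n) :
    i < ⟨j + 1, hj⟩ ↔ i ≤ j := by
  simp only [Fin.lt_def, Fin.le_def, Nat.lt_succ_iff]

theorem Fin.lt_mk_val_add_one {n : ℕ} {j : Fin n} (hj : (j : ℕ) + 1 < n) : j < ⟨j + 1, hj⟩ :=
  (Fin.lt_mk_val_add_one_iff hj).2 le_rfl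

theorem Fin.strictMono_of_lt_add_one {n : ℕ} {β : Type*} [Preorder β] {g : Fin n → β}
    (h : ∀ (j : Fin n) (hj : (j : ℕ) + 1 < n), g j < g ⟨j + 1, hj⟩) : StrictMono g := by
  cases n with
  | zero => exact fun a => a.elim0
  | succ n => exact Fin.strictMono_iff_lt_succ.2 fun i => h (castSucc i) (by simp)

namespace Tuple

variable {n : ℕ} {β : Type*} [LinearOrder β] {g : Fin n → β}

theorem eq_sort_of_strictMono {σ : Equiv.Perm (Fin n)} (h : StrictMono (g ∘ σ)) :
    σ = sort g :=
  eq_sort_iff.2 ⟨h.monotone, fun _ _ hij heq => absurd heq (h hij).ne⟩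

theorem strictMono_sort (hg : Injective g) : StrictMono (g ∘ sort g) :=
  (monotone_sort g).strictMono_of_injective (hg.comp (sort g).injective)

theorem sort_inv_lt_sort_inv_iff (hg : Injective g) {x y : Fin n} :
    (sort g)⁻¹ x < (sort g)⁻¹ y ↔ g x < g y := by
  simpa using ((strictMono_sort hg).lt_iff_lt (a := (sort g)⁻¹ x) (b := (sort g)⁻¹ y)).symm

theorem sort_inv_le_sort_inv_iff (hg : Injective g) {x y : Fin n} :
    (sort g)⁻¹ x ≤ (sort g)⁻¹ y ↔ g x ≤ g y := by
  simpa using ((strictMono_sort hg).le_iff_le (a := (sort g)⁻¹ x) (b := (sort g)⁻¹ y)).symm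

end Tuple

namespace RajRegularity

variable {n : ℕ}

def blockKey (f : Fin n → Fin n) (v : Fin n) : Fin n ×ₗ (Fin n)ᵒᵈ :=
  toLex (f v, toDual v)

theorem blockKey_injective (f : Fin n → Fin n) : Injective (blockKey f) :=
  fun _ _ h => toDual.injective (congrArg Prod.snd (toLex.injective h))

theorem blockKey_lt_blockKey_iff {f : Fin n → Fin n} {x y : Fin n} :
    blockKey f x < blockKey f y ↔ f x < f y ∨ f x = f y ∧ y < x :=
  Prod.Lex.toLex_lt_toLex

theorem blockKey_le_blockKey_iff {f : Fin n → Fin n} {x y : Fin n} :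
    blockKey f x ≤ blockKey f y ↔ f x < f y ∨ f x = f y ∧ y ≤ x :=
  Prod.Lex.toLex_le_toLex

/-- For a fireworks permutation, the head of the decreasing run containing `v`. -/
def leader (w : Equiv.Perm (Fin n)) (v : Fin n) : Fin n :=
  ({y | v ≤ y ∧ w⁻¹ y ≤ w⁻¹ v} : Finset (Fin n)).max' ⟨v, by simp⟩

section leader

variable (w : Equiv.Perm (Fin n))

theorem leader_spec (v : Fin n) :
    v ≤ leader w v ∧ w⁻¹ (leader w v) ≤ w⁻¹ v :=
  (mem_filter.1 (max'_mem ({y | v ≤ y ∧ w⁻¹ y ≤ w⁻¹ v} : Finset (Fin n)) _)).2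

theorem le_leader (v : Fin n) : v ≤ leader w v :=
  (leader_spec w v).1

theorem leader_inv_le (v : Fin n) : w⁻¹ (leader w v) ≤ w⁻¹ v :=
  (leader_spec w v).2

variable {w}

theorem le_leader_of {v y : Fin n} (hvy : v ≤ y) (hy : w⁻¹ y ≤ w⁻¹ v) : y ≤ leader w v :=
  le_max' _ _ (mem_filter.2 ⟨mem_univ y, hvy, hy⟩)

theorem leader_le_of {v u : Fin n}
    (h : ∀ y, v ≤ y → w⁻¹ y ≤ w⁻¹ v → y ≤ u) : leader w v ≤ u :=
  max'_le _ _ _ fun y hy => h y (mem_filter.1 hy).2.1 (mem_filter.1 hy).2.2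

theorem leader_leader (v : Fin n) : leader w (leader w v) = leader w v :=
  le_antisymm
    (leader_le_of fun _ h1 h2 =>
      le_leader_of ((le_leader w v).trans h1) (h2.trans (leader_inv_le w v)))
    (le_leader w _)

theorem leader_apply_eq_self {k : Fin n} (h : ∀ i < k, w i < w k) : leader w (w k) = w k := by
  refine le_antisymm (leader_le_of fun y _ hy => ?_) (le_leader w _)
  rw [Equiv.Perm.inv_apply_self] at hy
  rcases hy.lt_or_eq with hlt | heq
  · simpa using (h _ hlt).le
  · simp [← heq]

theorem leader_apply_lt {k u : Fin n} (h : ∀ i ≤ k, w i < u) : leader w (w k) < u := by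
  simpa using h _ ((leader_inv_le w (w k)).trans_eq (w.inv_apply_self k))

theorem leader_apply_eq_of_lt {j : Fin n} (hj : (j : ℕ) + 1 < n) (hdesc : w ⟨j + 1, hj⟩ < w j) :
    leader w (w ⟨j + 1, hj⟩) = leader w (w j) := by
  have hlead : w ⟨j + 1, hj⟩ < leader w (w j) := hdesc.trans_le (le_leader w (w j))
  refine le_antisymm (leader_le_of fun y _ hy => ?_) (le_leader_of hlead.le ?_)
  · rw [Equiv.Perm.inv_apply_self] at hy
    rcases hy.lt_or_eq with hlt | heq
    · have hyj : w⁻¹ y ≤ w⁻¹ (w j) := by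
        rw [Equiv.Perm.inv_apply_self]
        exact (Fin.lt_mk_val_add_one_iff hj).1 hlt
      rcases le_or_gt (w j) y with hle | hgt
      · exact le_leader_of hle hyj
      · exact hgt.le.trans (le_leader w (w j))
    · simpa [← heq] using hlead.le
  · rw [Equiv.Perm.inv_apply_self]
    exact ((leader_inv_le w (w j)).trans_eq (w.inv_apply_self j)).trans
      (Fin.lt_mk_val_add_one hj).le

end leader

theorem Fireworks.lt_of_ascent {w : Equiv.Perm (Fin n)} (hw : Fireworks w) {i j : Fin n}
    (hj : (j : ℕ) + 1 < n) (hij : i ≤ j) (hasc : w j < w ⟨j + 1, hj⟩) : w i < w ⟨j + 1, hj⟩ := by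
  rcases hij.lt_or_eq with hlt | rfl
  · refine lt_of_le_of_ne (not_lt.1 fun hgt => hw ⟨i, j, hj, hlt, hasc, hgt⟩) ?_
    exact w.injective.ne (Fin.ne_of_lt (hlt.trans (Fin.lt_mk_val_add_one hj)))
  · exact hasc

theorem Fireworks.strictMono_blockKey_leader {w : Equiv.Perm (Fin n)} (hw : Fireworks w) :
    StrictMono (blockKey (leader w) ∘ w) := by
  refine Fin.strictMono_of_lt_add_one fun j hj => ?_
  -- at an ascent the top exceeds everything before it, so it starts a new run
  rcases (w.injective.ne (Fin.ne_of_lt (Fin.lt_mk_val_add_one hj))).lt_or_gt with hasc | hdesc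
  · have hprev : ∀ i ≤ j, w i < w ⟨j + 1, hj⟩ := fun i hi => hw.lt_of_ascent hj hi hasc
    refine blockKey_lt_blockKey_iff.2 (Or.inl ?_)
    rw [leader_apply_eq_self fun i hi => hprev i ((Fin.lt_mk_val_add_one_iff hj).1 hi)]
    exact leader_apply_lt hprev
  · exact blockKey_lt_blockKey_iff.2 (Or.inr ⟨(leader_apply_eq_of_lt hj hdesc).symm, hdesc⟩)

theorem le_of_blockKey_le {f : Fin n → Fin n} {x y : Fin n} (h : blockKey f x ≤ blockKey f y) :
    f x ≤ f y :=
  (blockKey_le_blockKey_iff.1 h).elim le_of_lt fun h => h.1.le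

section sort

open Tuple

variable {f : Fin n → Fin n}

theorem blockKey_apply_le (hf : ∀ v, v ≤ f v) (hff : ∀ v, f (f v) = f v) (v : Fin n) :
    blockKey f (f v) ≤ blockKey f v :=
  blockKey_le_blockKey_iff.2 (Or.inr ⟨hff v, hf v⟩)

theorem leader_sort_blockKey (hf : ∀ v, v ≤ f v) (hff : ∀ v, f (f v) = f v) :
    leader (sort (blockKey f)) = f := by
  refine funext fun v => le_antisymm (leader_le_of fun y _ hy => ?_) (le_leader_of (hf v) ?_)
  · exact (hf y).trans (le_of_blockKey_le ((sort_inv_le_sort_inv_iff (blockKey_injective f)).1 hy))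
  · exact (sort_inv_le_sort_inv_iff (blockKey_injective f)).2 (blockKey_apply_le hf hff v)

/-- An ascent of `sort (blockKey f)` ends at a block maximum: that maximum sorts no later than
the top of the ascent, but after its bottom, which lies in an earlier block. -/
theorem apply_sort_blockKey_eq_self_of_ascent (hf : ∀ v, v ≤ f v) (hff : ∀ v, f (f v) = f v)
    {j : Fin n} (hj : (j : ℕ) + 1 < n)
    (hasc : sort (blockKey f) j < sort (blockKey f) ⟨j + 1, hj⟩) :
    f (sort (blockKey f) ⟨j + 1, hj⟩) = sort (blockKey f) ⟨j + 1, hj⟩ := by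
  set w := sort (blockKey f)
  set u := w ⟨j + 1, hj⟩
  have hinj := blockKey_injective f
  have hkey : blockKey f (w j) < blockKey f u := strictMono_sort hinj (Fin.lt_mk_val_add_one hj)
  have hlt : f (w j) < f u :=
    (blockKey_lt_blockKey_iff.1 hkey).resolve_right fun h => lt_asymm hasc h.2
  have h1 : j < w⁻¹ (f u) := by
    rw [← w.inv_apply_self j, sort_inv_lt_sort_inv_iff hinj]
    exact blockKey_lt_blockKey_iff.2 (Or.inl (hlt.trans_eq (hff u).symm))
  have h2 : w⁻¹ (f u) ≤ ⟨j + 1, hj⟩ := by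
    rw [← w.inv_apply_self ⟨j + 1, hj⟩, sort_inv_le_sort_inv_iff hinj]
    exact blockKey_apply_le hf hff u
  have hpos : w⁻¹ (f u) = ⟨j + 1, hj⟩ :=
    le_antisymm h2 (not_lt.1 fun h => ((Fin.lt_mk_val_add_one_iff hj).1 h).not_gt h1)
  simpa using congrArg w hpos

theorem fireworks_sort_blockKey (hf : ∀ v, v ≤ f v) (hff : ∀ v, f (f v) = f v) :
    Fireworks (sort (blockKey f)) := by
  rintro ⟨i, j, hj, hij, hasc, hdesc⟩
  have hfix := apply_sort_blockKey_eq_self_of_ascent hf hff hj hasc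
  have hkey := strictMono_sort (blockKey_injective f) (hij.trans (Fin.lt_mk_val_add_one hj))
  exact hdesc.not_ge ((hf _).trans ((le_of_blockKey_le hkey.le).trans_eq hfix))

end sort

def fireworksEquivBlockMaxMap :
    {w : Equiv.Perm (Fin n) // Fireworks w} ≃ BlockMaxMap (Fin n) where
  toFun w := ⟨leader w.1, le_leader w.1, leader_leader⟩
  invFun f := ⟨Tuple.sort (blockKey f.1), fireworks_sort_blockKey f.2.1 f.2.2⟩
  left_inv w := Subtype.ext (Tuple.eq_sort_of_strictMono w.2.strictMono_blockKey_leader).symm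
  right_inv f := Subtype.ext (leader_sort_blockKey f.2.1 f.2.2)

/-- The number of fireworks permutations of `{1,…,n}` equals the number of
set partitions of `{1,…,n}` (the `n`-th Bell number). -/
theorem card_fireworks_eq_card_setPartitions (n : ℕ) :
    Nat.card {w : Equiv.Perm (Fin n) // Fireworks w} =
      Nat.card (Finpartition (Finset.univ : Finset (Fin n))) :=
  Nat.card_congr (fireworksEquivBlockMaxMap.trans Finpartition.equivBlockMaxMap.symm)

end RajRegularity
end
end

section
/- Let w be a permutation of {1,…,n}. Then w is a valley permutation if and only if w is both dominant and inverse fireworks; and w is an inverse valley permutation if and only if w is both dominant and fireworks. -/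
open scoped Classical

noncomputable section

namespace RajRegularity

variable {n : ℕ}

/-! The valley of `w` sits at the position `m` of its minimal value. Avoiding 132 forces `w` to
increase after `m`. Before `m`, an ascent `w i < w j` is impossible: the value `w j - 1` sits
either after `j`, giving a 132 pattern, or before `j`, and then together with `w m` it gives
an inverse-fireworks pattern. -/

theorem Dominant.inv {w : Equiv.Perm (Fin n)} (h : Dominant w) : Dominant w⁻¹ := by
  rintro ⟨i, j, k, hij, hjk, hik, hkj⟩
  exact h ⟨w⁻¹ i, w⁻¹ k, w⁻¹ j, hik, hkj, by simpa using hij, by simpa using hjk⟩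

theorem dominant_inv_iff {w : Equiv.Perm (Fin n)} : Dominant w⁻¹ ↔ Dominant w :=
  ⟨fun h => inv_inv w ▸ h.inv, Dominant.inv⟩

/-- Inverse fireworks means avoiding the pattern 231 in which the `2` and the `3` are
consecutive values. -/
theorem invFireworks_iff {w : Equiv.Perm (Fin n)} :
    InvFireworks w ↔
      ¬∃ p q r : Fin n, p < q ∧ q < r ∧ (w q : ℕ) = w p + 1 ∧ w r < w p := by
  constructor
  · rintro h ⟨p, q, r, hpq, hqr, hadj, hrp⟩
    have hlt : (w p : ℕ) + 1 < n := hadj ▸ (w q).isLt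
    have hnext : (⟨w p + 1, hlt⟩ : Fin n) = w q := Fin.ext hadj.symm
    exact h ⟨w r, w p, hlt, hrp, by simpa [hnext] using hpq, by simpa [hnext] using hqr⟩
  · rintro h ⟨i, j, hj, hij, hji, hj'i⟩
    exact h ⟨w⁻¹ j, w⁻¹ ⟨j + 1, hj⟩, w⁻¹ i, hji, hj'i, by simp, by simpa using hij⟩

theorem Valley.dominant {w : Equiv.Perm (Fin n)} (h : Valley w) : Dominant w := by
  obtain ⟨a, hdec, hinc⟩ := h
  rintro ⟨i, j, k, hij, hjk, hik, hkj⟩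
  rcases le_or_gt a j with haj | hja
  · exact (hinc j k haj hjk).asymm hkj
  · exact (hdec i j hij hja.le).asymm (hik.trans hkj)

theorem Valley.invFireworks {w : Equiv.Perm (Fin n)} (h : Valley w) : InvFireworks w := by
  obtain ⟨a, hdec, hinc⟩ := h
  rw [invFireworks_iff]
  rintro ⟨p, q, r, hpq, hqr, hadj, hrp⟩
  have hpq' : w p < w q := by rw [Fin.lt_def]; omega
  rcases le_or_gt a q with haq | hqa
  · exact (hinc q r haq hqr).asymm (hrp.trans hpq')
  · exact (hdec p q hpq hqa.le).asymm hpq'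

theorem Dominant.apply_lt_apply_of_min_le {w : Equiv.Perm (Fin n)} (hd : Dominant w) {m : Fin n}
    (hm : ∀ k, w m ≤ w k) {i j : Fin n} (hmi : m ≤ i) (hij : i < j) : w i < w j := by
  rcases hmi.eq_or_lt with rfl | hmi
  · exact (hm j).lt_of_ne (w.injective.ne hij.ne)
  · by_contra! hji
    exact hd ⟨m, i, j, hmi, hij, (hm j).lt_of_ne (w.injective.ne (hmi.trans hij).ne),
      hji.lt_of_ne (w.injective.ne hij.ne')⟩

theorem Dominant.apply_lt_apply_of_le_min {w : Equiv.Perm (Fin n)} (hd : Dominant w)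
    (hf : InvFireworks w) {m : Fin n} (hm : ∀ k, w m ≤ w k) {i j : Fin n} (hij : i < j)
    (hjm : j ≤ m) : w j < w i := by
  by_contra! hij'
  have hlt : w i < w j := hij'.lt_of_ne (w.injective.ne hij.ne)
  have hj_pos : 0 < (w j : ℕ) := (Nat.zero_le _).trans_lt hlt
  obtain ⟨q, hq⟩ := w.surjective ⟨w j - 1, by omega⟩
  have hadj : (w j : ℕ) = w q + 1 := by
    have := congrArg Fin.val hq; simp only at this; omega
  have hiq : w i ≤ w q := by rw [Fin.le_def]; rw [Fin.lt_def] at hlt; omega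
  have hqj : q < j := by
    by_contra! hjq
    rcases hjq.eq_or_lt with hjq | hjq
    · rw [hjq] at hadj; omega
    · refine hd ⟨i, j, q, hij, hjq, hiq.lt_of_ne (w.injective.ne (hij.trans hjq).ne), ?_⟩
      rw [Fin.lt_def]; omega
  have hjm' : j < m := hjm.lt_of_ne (ne_of_apply_ne w ((hm i).trans_lt hlt).ne')
  rw [invFireworks_iff] at hf
  exact hf ⟨q, j, m, hqj, hjm', hadj, (hm q).lt_of_ne (w.injective.ne (hqj.trans hjm').ne')⟩

theorem valley_of_dominant_of_invFireworks {w : Equiv.Perm (Fin n)} (hd : Dominant w)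
    (hf : InvFireworks w) : Valley w := by
  cases isEmpty_or_nonempty (Fin n)
  · exact ⟨0, fun i => isEmptyElim i, fun i => isEmptyElim i⟩
  · obtain ⟨m, hm⟩ := Finite.exists_min w
    exact ⟨m, fun i j hij hjm => hd.apply_lt_apply_of_le_min hf hm hij hjm,
      fun i j hmi hij => hd.apply_lt_apply_of_min_le hm hmi hij⟩

theorem valley_iff_dominant_and_invFireworks {w : Equiv.Perm (Fin n)} :
    Valley w ↔ Dominant w ∧ InvFireworks w :=
  ⟨fun h => ⟨h.dominant, h.invFireworks⟩,
    fun h => valley_of_dominant_of_invFireworks h.1 h.2⟩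

/-- `w` is a valley permutation iff `w` is dominant and inverse fireworks;
`w` is an inverse valley permutation iff `w` is dominant and fireworks. -/
theorem valley_iff_dominant_and_fireworks (n : ℕ) (w : Equiv.Perm (Fin n)) :
    (Valley w ↔ Dominant w ∧ InvFireworks w) ∧
    (Valley w⁻¹ ↔ Dominant w ∧ Fireworks w) := by
  refine ⟨valley_iff_dominant_and_invFireworks, ?_⟩
  rw [valley_iff_dominant_and_invFireworks, dominant_inv_iff, InvFireworks, inv_inv]

end RajRegularity
end
end

section
/- Every permutation w of {1,…,n} has the same shape as its inverse, i.e. α_k(w) = α_k(w⁻¹) for all k; in particular raj(w) = raj(w⁻¹). -/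
open scoped Classical

noncomputable section

namespace RajRegularity

variable {n : ℕ}

/-! Transposing the graph of `w` carries the positions of an increasing subsequence of `w`
starting at `i` to those of an increasing subsequence of `w⁻¹` starting at `w i`, so
`lisFrom w⁻¹ (w i) = lisFrom w i`. Since `ε_i(w) = n + 1 − lisFrom w i`, the map `i ↦ w i`
carries the fibres of `ε(w)` onto those of `ε(w⁻¹)`; and `raj w = Σᵢ ε_i(w) − Σᵢ i`. -/

lemma lisFrom_le_lisFrom_inv_apply (w : Equiv.Perm (Fin n)) (i : Fin n) :
    lisFrom w i ≤ lisFrom w⁻¹ (w i) := by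
  refine Finset.sup_le fun s hs => ?_
  simp only [Finset.mem_filter, Finset.mem_univ, true_and] at hs
  obtain ⟨his, hge, hinc⟩ := hs
  have hmono : StrictMonoOn w (s : Set (Fin n)) := hinc
  rw [← Finset.card_map w.toEmbedding]
  refine Finset.le_sup ?_
  simp only [Finset.mem_filter, Finset.mem_univ, true_and, Finset.mem_map_equiv,
    Equiv.Perm.inv_def, Equiv.symm_apply_apply]
  refine ⟨his, fun j hj => ?_, fun j hj k hk hjk => ?_⟩
  · simpa using (hmono.le_iff_le his hj).mpr (hge _ hj)
  · simpa using (hmono.lt_iff_lt hj hk).mp (by simpa using hjk)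

lemma lisFrom_inv_apply (w : Equiv.Perm (Fin n)) (i : Fin n) :
    lisFrom w⁻¹ (w i) = lisFrom w i :=
  le_antisymm (by simpa using lisFrom_le_lisFrom_inv_apply w⁻¹ (w i))
    (lisFrom_le_lisFrom_inv_apply w i)

lemma lisFrom_le (w : Equiv.Perm (Fin n)) (i : Fin n) : lisFrom w i ≤ n - (i : ℕ) := by
  refine Finset.sup_le fun s hs => ?_
  simp only [Finset.mem_filter, Finset.mem_univ, true_and] at hs
  calc s.card ≤ (Finset.Ici i).card :=
        Finset.card_le_card fun j hj => Finset.mem_Ici.mpr (hs.2.1 j hj)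
    _ = n - (i : ℕ) := Fin.card_Ici i

lemma eps_eq_sub_lisFrom (w : Equiv.Perm (Fin n)) (i : Fin n) :
    eps w i = n + 1 - lisFrom w i := by
  have := lisFrom_le w i
  unfold eps rajCode
  omega

lemma eps_inv_apply (w : Equiv.Perm (Fin n)) (i : Fin n) : eps w⁻¹ (w i) = eps w i := by
  rw [eps_eq_sub_lisFrom, eps_eq_sub_lisFrom, lisFrom_inv_apply]

lemma shape_inv (w : Equiv.Perm (Fin n)) : shape w⁻¹ = shape w := by
  funext k
  simp only [shape, Finset.card_filter,
    ← Equiv.sum_comp w (fun i => if eps w⁻¹ i = _ then 1 else 0), eps_inv_apply]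

lemma sum_eps (w : Equiv.Perm (Fin n)) :
    ∑ i, eps w i = ∑ i : Fin n, ((i : ℕ) + 1) + raj w := by
  simp only [eps, raj, Finset.sum_add_distrib]

lemma raj_inv (w : Equiv.Perm (Fin n)) : raj w⁻¹ = raj w := by
  have hsum : ∑ i, eps w⁻¹ i = ∑ i, eps w i := by
    simp only [← Equiv.sum_comp w (eps w⁻¹), eps_inv_apply]
  rw [sum_eps, sum_eps] at hsum
  omega

/-- `w` and `w⁻¹` have the same shape; in particular `raj(w) = raj(w⁻¹)`. -/
theorem shape_inv_eq_and_raj_inv_eq (n : ℕ) (w : Equiv.Perm (Fin n)) :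
    (∀ k : Fin n, shape w k = shape w⁻¹ k) ∧ raj w = raj w⁻¹ :=
  ⟨fun k => by rw [shape_inv], (raj_inv w).symm⟩

end RajRegularity
end
end

section
/- Let u and v be permutations of {1,…,n} with shapes α(u) and α(v). If α(u) ⪰ α(v) in dominance order, then raj(u) ≥ raj(v); if α(u) ≻ α(v), then raj(u) > raj(v). -/
open scoped Classical

noncomputable section

namespace RajRegularity

variable {n : ℕ}

lemma one_le_lisFrom (w : Equiv.Perm (Fin n)) (i : Fin n) : 1 ≤ lisFrom w i := by
  have h : ({i} : Finset (Fin n)) ∈ Finset.univ.filter fun s : Finset (Fin n) =>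
      i ∈ s ∧ (∀ j ∈ s, i ≤ j) ∧ ∀ j ∈ s, ∀ k ∈ s, j < k → w j < w k := by
    simp
  unfold lisFrom
  calc 1 = ({i} : Finset (Fin n)).card := (Finset.card_singleton i).symm
    _ ≤ _ := Finset.le_sup h

lemma eps_le (w : Equiv.Perm (Fin n)) (i : Fin n) : eps w i ≤ n := by
  have h1 := one_le_lisFrom w i
  have h2 := i.isLt
  unfold eps rajCode
  omega

/-- Sum of the tail sums of the shape equals a constant plus `raj`. -/
lemma sum_tails (w : Equiv.Perm (Fin n)) :
    ∑ m : Fin n, ∑ k ∈ Finset.univ.filter (fun k : Fin n => m ≤ k), shape w k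
      = (∑ i : Fin n, ((i : ℕ) + 1)) + raj w := by
  have step1 :
      ∑ m : Fin n, ∑ k ∈ Finset.univ.filter (fun k : Fin n => m ≤ k), shape w k
        = ∑ k : Fin n, ((k : ℕ) + 1) * shape w k := by
    calc ∑ m : Fin n, ∑ k ∈ Finset.univ.filter (fun k : Fin n => m ≤ k), shape w k
        = ∑ m : Fin n, ∑ k : Fin n, if m ≤ k then shape w k else 0 := by
          simp [Finset.sum_filter]
      _ = ∑ k : Fin n, ∑ m : Fin n, if m ≤ k then shape w k else 0 := Finset.sum_comm
      _ = ∑ k : Fin n, ((k : ℕ) + 1) * shape w k := by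
          refine Finset.sum_congr rfl fun k _ => ?_
          rw [← Finset.sum_filter, Finset.sum_const]
          have hfil : (Finset.univ.filter fun m : Fin n => m ≤ k) = Finset.Iic k := by
            ext m; simp
          rw [hfil, Fin.card_Iic, smul_eq_mul]
  have step2 :
      ∑ k : Fin n, ((k : ℕ) + 1) * shape w k = ∑ i : Fin n, eps w i := by
    calc ∑ k : Fin n, ((k : ℕ) + 1) * shape w k
        = ∑ k : Fin n, ∑ i ∈ Finset.univ.filter (fun i : Fin n => eps w i = (k : ℕ) + 1),
            eps w i := by
          refine Finset.sum_congr rfl fun k _ => ?_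
          rw [shape]
          rw [Finset.sum_congr rfl (g := fun _ => (k : ℕ) + 1)
            (fun i hi => (Finset.mem_filter.mp hi).2), Finset.sum_const, smul_eq_mul,
            mul_comm]
      _ = ∑ k : Fin n, ∑ i : Fin n, if eps w i = (k : ℕ) + 1 then eps w i else 0 := by
          simp [Finset.sum_filter]
      _ = ∑ i : Fin n, ∑ k : Fin n, if eps w i = (k : ℕ) + 1 then eps w i else 0 :=
          Finset.sum_comm
      _ = ∑ i : Fin n, eps w i := by
          refine Finset.sum_congr rfl fun i _ => ?_
          have h1 : 1 ≤ eps w i := by unfold eps; omega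
          have h2 := eps_le w i
          have hg : eps w i - 1 < n := by omega
          have hcond : ∀ k : Fin n, (eps w i = (k : ℕ) + 1) ↔ k = (⟨eps w i - 1, hg⟩ : Fin n) := by
            intro k; rw [Fin.ext_iff]; simp; omega
          calc ∑ k : Fin n, (if eps w i = (k : ℕ) + 1 then eps w i else 0)
              = ∑ k : Fin n, if k = (⟨eps w i - 1, hg⟩ : Fin n) then eps w i else 0 := by
                refine Finset.sum_congr rfl fun k _ => ?_
                exact if_congr (hcond k) rfl rfl
            _ = eps w i := by rw [Finset.sum_ite_eq' Finset.univ]; simp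
  rw [step1, step2]
  unfold eps raj
  rw [Finset.sum_add_distrib]

lemma shape_eq_of_tails (u v : Equiv.Perm (Fin n))
    (h : ∀ m : Fin n,
      (∑ k ∈ Finset.univ.filter (fun k : Fin n => m ≤ k), shape u k)
        = ∑ k ∈ Finset.univ.filter (fun k : Fin n => m ≤ k), shape v k) :
    shape u = shape v := by
  funext k
  have hfil : (Finset.univ.filter fun j : Fin n => k ≤ j)
      = insert k (Finset.univ.filter fun j : Fin n => k < j) := by
    ext j
    simp only [Finset.mem_filter, Finset.mem_univ, true_and, Finset.mem_insert,
      Fin.le_def, Fin.lt_def, Fin.ext_iff]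
    omega
  have hnot : k ∉ (Finset.univ.filter fun j : Fin n => k < j) := by simp
  have htail : (∑ j ∈ Finset.univ.filter (fun j : Fin n => k < j), shape u j)
      = ∑ j ∈ Finset.univ.filter (fun j : Fin n => k < j), shape v j := by
    by_cases hk : (k : ℕ) + 1 < n
    · have heq : (Finset.univ.filter fun j : Fin n => k < j)
          = Finset.univ.filter fun j : Fin n => (⟨(k : ℕ) + 1, hk⟩ : Fin n) ≤ j := by
        ext j
        simp only [Finset.mem_filter, Finset.mem_univ, true_and, Fin.le_def, Fin.lt_def]
        omega
      rw [heq]; exact h ⟨(k : ℕ) + 1, hk⟩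
    · have heq : (Finset.univ.filter fun j : Fin n => k < j) = ∅ := by
        ext j
        simp only [Finset.mem_filter, Finset.mem_univ, true_and, Fin.lt_def,
          Finset.notMem_empty, iff_false]
        have := j.isLt; omega
      simp [heq]
  have hk := h k
  rw [hfil, Finset.sum_insert hnot, Finset.sum_insert hnot, htail] at hk
  omega

/-- If `α(u) ⪰ α(v)` in dominance order, then `raj(u) ≥ raj(v)`; if
`α(u) ≻ α(v)`, then `raj(u) > raj(v)`. -/
theorem raj_mono_of_dominates (n : ℕ) (u v : Equiv.Perm (Fin n)) :
    (Dominates (shape u) (shape v) → raj v ≤ raj u) ∧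
    (Dominates (shape u) (shape v) → shape u ≠ shape v → raj v < raj u) := by
  have key : Dominates (shape u) (shape v) → raj v ≤ raj u := by
    intro hd
    have hu := sum_tails u
    have hv := sum_tails v
    have hle : (∑ m : Fin n, ∑ k ∈ Finset.univ.filter (fun k : Fin n => m ≤ k), shape v k)
        ≤ ∑ m : Fin n, ∑ k ∈ Finset.univ.filter (fun k : Fin n => m ≤ k), shape u k :=
      Finset.sum_le_sum fun m _ => hd m
    omega
  refine ⟨key, fun hd hne => ?_⟩
  rcases lt_or_eq_of_le (key hd) with hlt | heq
  · exact hlt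
  · exfalso
    apply hne
    have hu := sum_tails u
    have hv := sum_tails v
    have hsum : (∑ m : Fin n, ∑ k ∈ Finset.univ.filter (fun k : Fin n => m ≤ k), shape v k)
        = ∑ m : Fin n, ∑ k ∈ Finset.univ.filter (fun k : Fin n => m ≤ k), shape u k := by
      omega
    have hall := (Finset.sum_eq_sum_iff_of_le (fun m _ => hd m)).mp hsum
    exact shape_eq_of_tails u v fun m => (hall m (Finset.mem_univ m)).symm

end RajRegularity
end
end

section
/- Let w be a permutation of {1,…,n} and 1 ≤ i ≤ n−1. (a) If inv(s_i·w) = inv(w) − 1 (where s_i·w exchanges the values i and i+1 in w) and raj(s_i·w) = raj(w), then rajcode(s_i·w) = rajcode(w). (b) If w(i) > w(i+1) (so inv(w·s_i) = inv(w) − 1, where w·s_i exchanges the entries in positions i and i+1) and raj(w·s_i) = raj(w), then, writing rajcode(w) = (r_1,…,r_n), one has rajcode(w·s_i) = (r_1,…,r_{i−1}, r_{i+1}+1, r_i−1, r_{i+2},…,r_n). -/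
open scoped Classical

noncomputable section

namespace RajRegularity

variable {n : ℕ}

/-! Exchanging two adjacent positions, or two adjacent values, of `w` changes the relative order
of a single pair of entries. When that pair is an inversion, no increasing subsequence uses both of
its entries, so every increasing subsequence survives the exchange (re-indexed through the
transposition) and no entry of the Rajchgot code increases, up to the shift of positions `i ↔ i+1`.
For an exchange of values, one of `w` and `s_i·w` has that pair as an inversion, so their codes are
comparable in one direction or the other. Equality of the Rajchgot indices then forces each of
these inequalities to be an equality. -/

def IncreasingFrom (w : Equiv.Perm (Fin n)) (k : Fin n) (s : Finset (Fin n)) : Prop :=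
  k ∈ s ∧ (∀ m ∈ s, k ≤ m) ∧ StrictMonoOn w s

theorem card_le_lisFrom {w : Equiv.Perm (Fin n)} {k : Fin n} {s : Finset (Fin n)}
    (hs : IncreasingFrom w k s) : s.card ≤ lisFrom w k :=
  Finset.le_sup <| Finset.mem_filter.mpr
    ⟨Finset.mem_univ _, hs.1, hs.2.1, fun _ ha _ hb hab => hs.2.2 ha hb hab⟩

theorem lisFrom_le_iff {w : Equiv.Perm (Fin n)} {k : Fin n} {m : ℕ} :
    lisFrom w k ≤ m ↔ ∀ s, IncreasingFrom w k s → s.card ≤ m := by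
  refine ⟨fun h _ hs => (card_le_lisFrom hs).trans h, fun h => Finset.sup_le fun s hs => ?_⟩
  obtain ⟨-, hk, hmin, hmono⟩ := Finset.mem_filter.mp hs
  exact h s ⟨hk, hmin, fun a ha b hb => hmono a ha b hb⟩

theorem lisFrom_le_sub (w : Equiv.Perm (Fin n)) (k : Fin n) : lisFrom w k ≤ n - k :=
  lisFrom_le_iff.mpr fun _ hs =>
    (Finset.card_le_card fun m hm => Finset.mem_Ici.mpr (hs.2.1 m hm)).trans (Fin.card_Ici k).le

theorem lisFrom_le_lisFrom_of_perm {w w' f : Equiv.Perm (Fin n)} {k : Fin n}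
    (h : ∀ s, IncreasingFrom w k s → StrictMonoOn f s ∧ StrictMonoOn (w' ∘ f) s) :
    lisFrom w k ≤ lisFrom w' (f k) := by
  refine lisFrom_le_iff.mpr fun s hs => ?_
  obtain ⟨hf, hw'⟩ := h s hs
  rw [← Finset.card_map f.toEmbedding]
  refine card_le_lisFrom ⟨Finset.mem_map_of_mem _ hs.1, ?_, ?_⟩
  · simp only [Finset.forall_mem_map, Equiv.coe_toEmbedding]
    exact fun m hm => hf.monotoneOn hs.1 hm (hs.2.1 m hm)
  · simp only [Finset.coe_map, Equiv.coe_toEmbedding]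
    rintro _ ⟨a, ha, rfl⟩ _ ⟨b, hb, rfl⟩ hab
    exact hw' ha hb ((hf.lt_iff_lt ha hb).mp hab)

theorem strictMonoOn_swap {i j : Fin n} (hij : (j : ℕ) = i + 1) {s : Set (Fin n)}
    (hs : ¬ (i ∈ s ∧ j ∈ s)) : StrictMonoOn (Equiv.swap i j) s := by
  intro a ha b hb hab
  have hne : ¬ (a = i ∧ b = j) := by rintro ⟨rfl, rfl⟩; exact hs ⟨ha, hb⟩
  simp only [Equiv.swap_apply_def, Fin.lt_def, Fin.ext_iff] at hab hne ⊢
  split_ifs <;> omega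

theorem not_both_mem_of_inversion {w : Equiv.Perm (Fin n)} {s : Set (Fin n)}
    (hs : StrictMonoOn w s) {a b : Fin n} (hab : a < b) (hw : w b < w a) : ¬ (a ∈ s ∧ b ∈ s) :=
  fun ⟨ha, hb⟩ => (hs ha hb hab).asymm hw

variable {w : Equiv.Perm (Fin n)} {i j : Fin n}

theorem lisFrom_le_lisFrom_swap_mul (hij : (j : ℕ) = i + 1) (hinv : w⁻¹ j < w⁻¹ i) (k : Fin n) :
    lisFrom w k ≤ lisFrom (Equiv.swap i j * w) k := by
  refine lisFrom_le_lisFrom_of_perm (f := 1) fun s hs => ⟨strictMonoOn_id, ?_⟩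
  have hvalues : ¬ (i ∈ w '' s ∧ j ∈ w '' s) := by
    rintro ⟨⟨a, ha, rfl⟩, ⟨b, hb, rfl⟩⟩
    simp only [Equiv.Perm.inv_def, Equiv.symm_apply_apply] at hinv
    exact not_both_mem_of_inversion hs.2.2 hinv (by simp [Fin.lt_def, hij]) ⟨hb, ha⟩
  exact (strictMonoOn_swap hij hvalues).comp hs.2.2 (Set.mapsTo_image _ _)

theorem lisFrom_le_lisFrom_mul_swap (hij : (j : ℕ) = i + 1) (hdes : w j < w i) (k : Fin n) :
    lisFrom w k ≤ lisFrom (w * Equiv.swap i j) (Equiv.swap i j k) := by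
  refine lisFrom_le_lisFrom_of_perm fun s hs => ⟨strictMonoOn_swap hij ?_, ?_⟩
  · exact not_both_mem_of_inversion hs.2.2 (by simp [Fin.lt_def, hij]) hdes
  · convert hs.2.2 using 1
    ext m
    simp

theorem rajCode_eq_of_le_of_raj_eq {u v : Equiv.Perm (Fin n)}
    (hle : ∀ k, lisFrom v k ≤ lisFrom u k) (hraj : raj u = raj v) (k : Fin n) :
    rajCode u k = rajCode v k :=
  (Finset.sum_eq_sum_iff_of_le fun k _ => Nat.sub_le_sub_left (hle k) _).mp hraj k
    (Finset.mem_univ k)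

theorem rajCode_swap_mul_of_raj_eq (hij : (j : ℕ) = i + 1)
    (hraj : raj (Equiv.swap i j * w) = raj w) (k : Fin n) :
    rajCode (Equiv.swap i j * w) k = rajCode w k := by
  have hne : w⁻¹ j ≠ w⁻¹ i := w⁻¹.injective.ne (Fin.ne_of_val_ne (by omega))
  rcases hne.lt_or_gt with hinv | hinv
  · exact rajCode_eq_of_le_of_raj_eq (lisFrom_le_lisFrom_swap_mul hij hinv) hraj k
  · set u := Equiv.swap i j * w
    have hw : Equiv.swap i j * u = w := by simp [u, ← mul_assoc]
    have hinv' : u⁻¹ j < u⁻¹ i := by simpa [u] using hinv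
    refine (rajCode_eq_of_le_of_raj_eq (fun m => ?_) hraj.symm k).symm
    simpa [hw] using lisFrom_le_lisFrom_swap_mul hij hinv' m

theorem rajCode_mul_swap_of_raj_eq (hij : (j : ℕ) = i + 1) (hdes : w j < w i)
    (hraj : raj (w * Equiv.swap i j) = raj w) (k : Fin n) :
    rajCode (w * Equiv.swap i j) k + (if k = j then 1 else 0) =
      rajCode w (Equiv.swap i j k) + (if k = i then 1 else 0) := by
  have hne : i ≠ j := Fin.ne_of_val_ne (by omega)
  have hle (k : Fin n) : rajCode (w * Equiv.swap i j) k + (if k = j then 1 else 0) ≤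
      rajCode w (Equiv.swap i j k) + (if k = i then 1 else 0) := by
    have hk := lisFrom_le_lisFrom_mul_swap hij hdes (Equiv.swap i j k)
    rw [Equiv.swap_apply_self] at hk
    have hw := lisFrom_le_sub w (Equiv.swap i j k)
    -- at `k = j`, where `rajCode w i` drops by one, this gives `lisFrom w i < n - i`
    have hdescent := lisFrom_le_lisFrom_mul_swap hij hdes i
    have hu := lisFrom_le_sub (w * Equiv.swap i j) j
    rw [Equiv.swap_apply_left] at hdescent
    unfold rajCode
    by_cases hki : k = i
    · rw [hki, Equiv.swap_apply_left] at hk hw ⊢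
      rw [if_neg hne, if_pos rfl]
      omega
    by_cases hkj : k = j
    · rw [hkj, Equiv.swap_apply_right] at hk hw ⊢
      rw [if_pos rfl, if_neg hne.symm]
      omega
    rw [Equiv.swap_apply_of_ne_of_ne hki hkj] at hk hw ⊢
    rw [if_neg hki, if_neg hkj]
    omega
  have hsum : ∑ k, (rajCode (w * Equiv.swap i j) k + (if k = j then 1 else 0)) =
      ∑ k, (rajCode w (Equiv.swap i j k) + (if k = i then 1 else 0)) := by
    simp only [Finset.sum_add_distrib, Equiv.sum_comp (Equiv.swap i j) (rajCode w),
      Finset.sum_ite_eq', Finset.mem_univ, if_true]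
    exact congrArg (· + 1) hraj
  exact (Finset.sum_eq_sum_iff_of_le fun k _ => hle k).mp hsum k (Finset.mem_univ k)

/-- Let `i, j` be consecutive (`j = i + 1`).
(a) If `s_i·w` (exchanging the values `i` and `i+1` in `w`) has one fewer inversion than
`w` and the same Rajchgot index, then it has the same Rajchgot code.
(b) If `w i > w j` (so `w·s_i`, exchanging the entries in positions `i` and `i+1`, has one
fewer inversion) and `raj(w·s_i) = raj(w)`, then the Rajchgot code of `w·s_i` is that of
`w` with entries `i, i+1` replaced by `r_{i+1}+1, r_i−1`. -/
theorem rajCode_of_cover (n : ℕ) (w : Equiv.Perm (Fin n)) (i j : Fin n)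
    (hij : (j : ℕ) = (i : ℕ) + 1) :
    (invNum (Equiv.swap i j * w) + 1 = invNum w →
      raj (Equiv.swap i j * w) = raj w →
      ∀ k : Fin n, rajCode (Equiv.swap i j * w) k = rajCode w k) ∧
    (w j < w i →
      raj (w * Equiv.swap i j) = raj w →
      rajCode (w * Equiv.swap i j) i = rajCode w j + 1 ∧
      rajCode (w * Equiv.swap i j) j + 1 = rajCode w i ∧
      ∀ k : Fin n, k ≠ i → k ≠ j → rajCode (w * Equiv.swap i j) k = rajCode w k) := by
  refine ⟨fun _ hraj => rajCode_swap_mul_of_raj_eq hij hraj, fun hdes hraj => ?_⟩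
  have hne : i ≠ j := Fin.ne_of_val_ne (by omega)
  have hcode := rajCode_mul_swap_of_raj_eq hij hdes hraj
  refine ⟨?_, ?_, fun k hki hkj => ?_⟩
  · simpa [hne] using hcode i
  · simpa [hne.symm] using hcode j
  · simpa [hki, hkj, Equiv.swap_apply_of_ne_of_ne hki hkj] using hcode k

end RajRegularity
end
end
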